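/- arXiv:1409.4526 — 2 statements merged into one kernel-verified Lean document; each statement's English description precedes it below -/
import Mathlib

section
/- Let b₁, b₂ ∈ ℤ² be linearly independent vectors, m an integer, and α, β ∈ ℚ the unique rationals with α·b₁ + β·b₂ = (m, 0). Let c' = ⌊α⌉·b₁ + ⌊β⌉·b₂ where ⌊·⌉ denotes rounding to a nearest integer (so |x − ⌊x⌉| ≤ 1/2). Then ‖(m,0) − c'‖∞ ≤ max(‖b₁‖∞, ‖b₂‖∞), where ‖(a,b)‖∞ = max(|a|,|b|). -/
/-! Writing `(m, 0) - c' = (α - ⌊α⌉) b₁ + (β - ⌊β⌉) b₂`, each coordinate is a combination of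
two basis coordinates with coefficients of absolute value at most `1/2`, hence bounded by the
larger of the two. -/

theorem abs_mul_add_mul_le_max_of_abs_le_half {K : Type*} [Field K] [LinearOrder K]
    [IsStrictOrderedRing K] {s t a b : K} (hs : |s| ≤ 1 / 2) (ht : |t| ≤ 1 / 2) :
    |s * a + t * b| ≤ max |a| |b| :=
  calc |s * a + t * b| ≤ |s| * |a| + |t| * |b| := by
        simpa only [abs_mul] using abs_add_le (s * a) (t * b)
    _ ≤ 1 / 2 * max |a| |b| + 1 / 2 * max |a| |b| := by
        gcongr
        exacts [le_max_left _ _, le_max_right _ _]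
    _ = max |a| |b| := by ring

theorem abs_sub_round_mul_add_round_mul_le {K : Type*} [Field K] [LinearOrder K]
    [IsStrictOrderedRing K] [FloorRing K] {x y : K} {a b c : ℤ}
    (h : x * a + y * b = c) :
    |c - (round x * a + round y * b)| ≤ max |a| |b| := by
  have key : ((c - (round x * a + round y * b) : ℤ) : K)
      = (x - round x) * a + (y - round y) * b := by
    push_cast
    linear_combination -h
  rw [← Int.cast_le (R := K), Int.cast_abs, key, Int.cast_max, Int.cast_abs, Int.cast_abs]
  exact abs_mul_add_mul_le_max_of_abs_le_half (abs_sub_round x) (abs_sub_round y)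

theorem stmt_8_general (b₁ b₂ : ℤ × ℤ) (m : ℤ) (α β : ℚ)
    (h1 : α * (b₁.1 : ℚ) + β * (b₂.1 : ℚ) = (m : ℚ))
    (h2 : α * (b₁.2 : ℚ) + β * (b₂.2 : ℚ) = 0) :
    max |m - (round α * b₁.1 + round β * b₂.1)|
        |0 - (round α * b₁.2 + round β * b₂.2)|
      ≤ max (max |b₁.1| |b₁.2|) (max |b₂.1| |b₂.2|) := by
  have h2' : α * (b₁.2 : ℚ) + β * (b₂.2 : ℚ) = ((0 : ℤ) : ℚ) := by exact_mod_cast h2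
  apply max_le
  · exact (abs_sub_round_mul_add_round_mul_le h1).trans
      (max_le_max (le_max_left _ _) (le_max_left _ _))
  · exact (abs_sub_round_mul_add_round_mul_le h2').trans
      (max_le_max (le_max_right _ _) (le_max_right _ _))

theorem stmt_8 (b₁ b₂ : ℤ × ℤ) (m : ℤ) (α β : ℚ)
    (hindep : b₁.1 * b₂.2 - b₁.2 * b₂.1 ≠ 0)
    (h1 : α * (b₁.1 : ℚ) + β * (b₂.1 : ℚ) = (m : ℚ))
    (h2 : α * (b₁.2 : ℚ) + β * (b₂.2 : ℚ) = 0) :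
    max |m - (round α * b₁.1 + round β * b₂.1)|
        |0 - (round α * b₁.2 + round β * b₂.2)|
      ≤ max (max |b₁.1| |b₁.2|) (max |b₂.1| |b₂.2|) :=
  stmt_8_general b₁ b₂ m α β h1 h2
end

section
/- Let p be an odd prime, ε = ±1, r an odd integer, and write (p + ε)² − 2ε·r² = 2^k·N and (p − ε)² + 2ε·r² = 2^{k'}·N' with N, N' odd. Then either k = k' = 1, or (k = 2 and k' ≥ 3), or (k ≥ 3 and k' = 2). -/
/-! Since `p ± ε` is even and `ε r²` is odd, both `(p + ε)² - 2εr²` and `(p - ε)² + 2εr²` are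
`≡ 2 mod 4`, so in fact always `k = k' = 1`. -/

lemma padicValInt_two_pow_mul_of_odd {N : ℤ} (hN : Odd N) (k : ℕ) :
    padicValInt 2 (2 ^ k * N) = k := by
  have hN0 : N ≠ 0 := by rintro rfl; exact Int.not_odd_zero hN
  have hN2 : ¬((2 : ℕ) : ℤ) ∣ N := by
    rwa [Nat.cast_ofNat, ← even_iff_two_dvd, Int.not_even_iff_odd]
  have h2k : (2 : ℤ) ^ k = ((2 ^ k : ℕ) : ℤ) := by norm_cast
  rw [padicValInt.mul (pow_ne_zero k two_ne_zero) hN0, h2k, padicValInt.of_nat,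
    padicValNat.prime_pow, padicValInt.eq_zero_of_not_dvd hN2, add_zero]

lemma padicValInt_two_sq_add_two_mul {a b : ℤ} (ha : Even a) (hb : Odd b) :
    padicValInt 2 (a ^ 2 + 2 * b) = 1 := by
  obtain ⟨c, rfl⟩ := ha
  calc padicValInt 2 ((c + c) ^ 2 + 2 * b) = padicValInt 2 (2 ^ 1 * (2 * c ^ 2 + b)) := by
        ring_nf
    _ = 1 := padicValInt_two_pow_mul_of_odd ((even_two_mul _).add_odd hb) 1

theorem stmt_13_general (p ε r N N' : ℤ) (k k' : ℕ) (hpodd : Odd p)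
    (hε : ε = 1 ∨ ε = -1) (hr : Odd r) (hN : Odd N) (hN' : Odd N')
    (h : (p + ε) ^ 2 - 2 * ε * r ^ 2 = 2 ^ k * N)
    (h' : (p - ε) ^ 2 + 2 * ε * r ^ 2 = 2 ^ k' * N') :
    (k = 1 ∧ k' = 1) ∨ (k = 2 ∧ 3 ≤ k') ∨ (3 ≤ k ∧ k' = 2) := by
  have hεodd : Odd ε := by rcases hε with rfl | rfl <;> decide
  have hεr : Odd (ε * r ^ 2) := hεodd.mul hr.pow
  refine Or.inl ⟨?_, ?_⟩
  · rw [← padicValInt_two_pow_mul_of_odd hN k, ← h, sub_eq_add_neg, mul_assoc, ← mul_neg]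
    exact padicValInt_two_sq_add_two_mul (hpodd.add_odd hεodd) hεr.neg
  · rw [← padicValInt_two_pow_mul_of_odd hN' k', ← h', mul_assoc]
    exact padicValInt_two_sq_add_two_mul (hpodd.sub_odd hεodd) hεr

theorem stmt_13 (p ε r N N' : ℤ) (k k' : ℕ) (hp : Prime p) (hpodd : Odd p)
    (hε : ε = 1 ∨ ε = -1) (hr : Odd r) (hN : Odd N) (hN' : Odd N')
    (h : (p + ε) ^ 2 - 2 * ε * r ^ 2 = 2 ^ k * N)
    (h' : (p - ε) ^ 2 + 2 * ε * r ^ 2 = 2 ^ k' * N') :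
    (k = 1 ∧ k' = 1) ∨ (k = 2 ∧ 3 ≤ k') ∨ (3 ≤ k ∧ k' = 2) :=
  stmt_13_general p ε r N N' k k' hpodd hε hr hN hN' h h'
end
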